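/- arXiv:2105.00901 — 3 statements merged into one kernel-verified Lean document; each statement's English description precedes it below -/
import Mathlib

section
/- For every R > 0 there exists a constant C_R > 0 such that for every λ > 0 and every nonzero k ∈ ℝ³, ∫_{{u ∈ ℝ³ : |u| ≤ 2R}} (λ² + (u·k)²)^{-1} du ≤ C_R λ^{-4/3} |k|^{-2/3}. -/
/-!
On the slab `|u·k| ≤ ρ‖k‖` the integrand is at most `λ⁻²`, and the slab meets the ball in a set
of volume `O(ρ)`: in an orthonormal basis starting with `k/‖k‖` it lies in a box of width `2ρ`.
Off the slab the integrand is at most `(ρ‖k‖)⁻²`. The choice `ρ = λ^{2/3}‖k‖^{-2/3}` makes both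
bounds equal to `λ^{-4/3}‖k‖^{-2/3}`.
-/

open Real MeasureTheory Set Metric Module

theorem norm_setIntegral_le_of_norm_le_const_on_inter_sdiff {α F : Type*} [MeasurableSpace α]
    [NormedAddCommGroup F] [NormedSpace ℝ F] {μ : Measure α} {f : α → F} {s t : Set α} {a b : ℝ}
    (hs : μ s < ⊤) (ht : MeasurableSet t) (hf : IntegrableOn f s μ)
    (ha : ∀ x ∈ s ∩ t, ‖f x‖ ≤ a) (hb : ∀ x ∈ s \ t, ‖f x‖ ≤ b) :
    ‖∫ x in s, f x ∂μ‖ ≤ a * μ.real (s ∩ t) + b * μ.real (s \ t) := by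
  rw [← integral_inter_add_sdiff ht hf]
  exact (norm_add_le _ _).trans <| add_le_add
    (norm_setIntegral_le_of_norm_le_const ((measure_mono inter_subset_left).trans_lt hs) ha)
    (norm_setIntegral_le_of_norm_le_const ((measure_mono sdiff_subset).trans_lt hs) hb)

section

variable {E : Type*} [NormedAddCommGroup E] [InnerProductSpace ℝ E] [FiniteDimensional ℝ E]
    [MeasurableSpace E] [BorelSpace E]

theorem OrthonormalBasis.volume_setOf_forall_abs_repr_le {ι : Type*} [Fintype ι]
    (b : OrthonormalBasis ι ℝ E) (c : ι → ℝ) :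
    volume {u : E | ∀ i, |b.repr u i| ≤ c i} = ∏ i, ENNReal.ofReal (2 * c i) := by
  have hbox : {u : E | ∀ i, |b.repr u i| ≤ c i}
      = WithLp.ofLp ∘ b.repr ⁻¹' univ.pi fun i => Icc (-c i) (c i) := by
    ext; simp only [abs_le, mem_ofPred_eq, mem_preimage, Function.comp_apply, mem_univ_pi, mem_Icc]
  rw [hbox, ((PiLp.volume_preserving_ofLp ι).comp b.measurePreserving_repr).measure_preimage
    (MeasurableSet.univ_pi fun _ => measurableSet_Icc).nullMeasurableSet, volume_pi_pi]
  congr with i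
  rw [Real.volume_Icc]
  ring_nf

theorem measureReal_closedBall_inter_slab_le {v : E} (hv : ‖v‖ = 1) {r ρ : ℝ}
    (hr : 0 ≤ r) (hρ : 0 ≤ ρ) :
    volume.real (closedBall (0 : E) r ∩ {u | |inner ℝ u v| ≤ ρ})
      ≤ 2 * ρ * (2 * r) ^ (finrank ℝ E - 1) := by
  classical
  have horth : Orthonormal ℝ ((↑) : ({v} : Set E) → E) := by
    refine ⟨fun i => ?_, fun i j hij => (hij (Subsingleton.elim i j)).elim⟩
    rwa [mem_singleton_iff.1 i.2]
  obtain ⟨s, b, hvs, hb⟩ := horth.exists_orthonormalBasis_extension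
  set i₀ : s := ⟨v, hvs rfl⟩
  set c : s → ℝ := Function.update (fun _ => r) i₀ ρ with hc_def
  have hsub : closedBall (0 : E) r ∩ {u | |inner ℝ u v| ≤ ρ}
      ⊆ {u | ∀ i, |b.repr u i| ≤ c i} := by
    rintro u ⟨hu, huv⟩ i
    rcases eq_or_ne i i₀ with rfl | hi
    · rwa [b.repr_apply_apply, hb, real_inner_comm, hc_def, Function.update_self]
    · rw [hc_def, Function.update_of_ne hi]
      calc |b.repr u i| ≤ ‖b.repr u‖ := PiLp.norm_apply_le (b.repr u) i
        _ = ‖u‖ := b.repr.norm_map u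
        _ ≤ r := mem_closedBall_zero_iff.1 hu
  have hc : ∀ i, 0 ≤ c i :=
    (Function.forall_update_iff _ fun _ x => 0 ≤ x).2 ⟨hρ, fun _ _ => hr⟩
  calc volume.real (closedBall (0 : E) r ∩ {u | |inner ℝ u v| ≤ ρ})
      ≤ volume.real {u : E | ∀ i, |b.repr u i| ≤ c i} := by
        refine measureReal_mono hsub ?_
        rw [b.volume_setOf_forall_abs_repr_le]
        exact ENNReal.prod_ne_top fun _ _ => ENNReal.ofReal_ne_top
    _ = ∏ i, 2 * c i := by
        rw [measureReal_def, b.volume_setOf_forall_abs_repr_le, ENNReal.toReal_prod]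
        congr with i
        exact ENNReal.toReal_ofReal (by linarith [hc i])
    _ = 2 * ρ * (2 * r) ^ (finrank ℝ E - 1) := by
        rw [Fintype.prod_eq_mul_prod_compl i₀, finrank_eq_card_basis b.toBasis,
          Finset.prod_congr rfl (g := fun _ => 2 * r) fun i hi => ?_, Finset.prod_const,
          Finset.card_compl, Finset.card_singleton, hc_def, Function.update_self]
        rw [hc_def, Function.update_of_ne (by simpa using hi)]

theorem setIntegral_closedBall_inv_sq_add_inner_sq_le {r ρ lam : ℝ} (hr : 0 ≤ r) (hρ : 0 < ρ)
    (hlam : lam ≠ 0) {k : E} (hk : k ≠ 0) :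
    ∫ u in closedBall (0 : E) r, (lam ^ 2 + inner ℝ u k ^ 2)⁻¹
      ≤ (lam ^ 2)⁻¹ * (2 * ρ * (2 * r) ^ (finrank ℝ E - 1))
        + ((ρ * ‖k‖) ^ 2)⁻¹ * volume.real (closedBall (0 : E) r) := by
  have hk' : 0 < ‖k‖ := norm_pos_iff.2 hk
  set slab : Set E := {u | |inner ℝ u k| ≤ ρ * ‖k‖}
  have hslab_eq : slab = {u | |inner ℝ u (‖k‖⁻¹ • k)| ≤ ρ} := by
    ext u
    rw [mem_ofPred_eq, mem_ofPred_eq, real_inner_smul_right, abs_mul, abs_inv, abs_norm,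
      inv_mul_le_iff₀ hk', mul_comm]
  have hcont : Continuous fun u : E => (lam ^ 2 + inner ℝ u k ^ 2)⁻¹ :=
    .inv₀ (by fun_prop) fun u => by positivity
  have hball := isCompact_closedBall (0 : E) r
  have hslab : ∀ u ∈ closedBall 0 r ∩ slab, ‖(lam ^ 2 + inner ℝ u k ^ 2)⁻¹‖ ≤ (lam ^ 2)⁻¹ := by
    intro u _
    rw [Real.norm_of_nonneg (by positivity)]
    exact inv_anti₀ (by positivity) (le_add_of_nonneg_right (sq_nonneg _))
  have hfar : ∀ u ∈ closedBall 0 r \ slab,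
      ‖(lam ^ 2 + inner ℝ u k ^ 2)⁻¹‖ ≤ ((ρ * ‖k‖) ^ 2)⁻¹ := by
    rintro u ⟨-, hu⟩
    rw [Real.norm_of_nonneg (by positivity), ← sq_abs (inner ℝ u k)]
    exact inv_anti₀ (by positivity) <| le_add_of_nonneg_of_le (sq_nonneg _) <|
      pow_le_pow_left₀ (by positivity) (not_le.1 hu).le 2
  refine (le_abs_self _).trans <| (norm_setIntegral_le_of_norm_le_const_on_inter_sdiff
    hball.measure_lt_top (measurableSet_le (by fun_prop) measurable_const)
    (hcont.continuousOn.integrableOn_compact hball) hslab hfar).trans ?_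
  gcongr
  · rw [show closedBall 0 r ∩ slab = _ from congrArg _ hslab_eq]
    exact measureReal_closedBall_inter_slab_le
      (by rw [norm_smul, norm_inv, norm_norm, inv_mul_cancel₀ hk'.ne']) hr hρ.le
  · exact hball.measure_lt_top.ne
  · exact sdiff_subset

theorem setIntegral_closedBall_inv_sq_add_inner_sq_le_rpow {r lam : ℝ} (hr : 0 ≤ r)
    (hlam : 0 < lam) {k : E} (hk : k ≠ 0) :
    ∫ u in closedBall (0 : E) r, (lam ^ 2 + inner ℝ u k ^ 2)⁻¹
      ≤ (2 * (2 * r) ^ (finrank ℝ E - 1) + volume.real (closedBall (0 : E) r))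
        * lam ^ (-(4:ℝ)/3) * ‖k‖ ^ (-(2:ℝ)/3) := by
  have hk' : 0 < ‖k‖ := norm_pos_iff.2 hk
  rw [mul_assoc]
  set t := lam ^ (-(4:ℝ)/3) * ‖k‖ ^ (-(2:ℝ)/3) with ht_def
  have ht : 0 < t := by positivity
  have ht3 : t ^ 3 * (lam ^ 4 * ‖k‖ ^ 2) = 1 := by
    rw [ht_def, mul_pow, ← rpow_mul_natCast hlam.le, ← rpow_mul_natCast hk'.le]
    norm_num
    field_simp
  clear_value t
  -- `ρ = λ² t` makes both terms of the split equal to a multiple of `t`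
  have hfar : ((lam ^ 2 * t * ‖k‖) ^ 2)⁻¹ = t := by
    rw [eq_inv_of_mul_eq_one_left (by linear_combination ht3 : (lam ^ 2 * t * ‖k‖) ^ 2 * t = 1),
      inv_inv]
  calc _ ≤ _ := setIntegral_closedBall_inv_sq_add_inner_sq_le (ρ := lam ^ 2 * t) hr
        (by positivity) hlam.ne' hk
    _ = _ := by
      rw [hfar]
      field_simp

end

/-- `∫_{|u|≤2R} (λ² + (u·k)²)⁻¹ du ≤ C_R λ^{-4/3}|k|^{-2/3}`. -/
theorem stmt14 (R : ℝ) (hR : 0 < R) :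
    ∃ C : ℝ, 0 < C ∧ ∀ lam : ℝ, 0 < lam →
      ∀ k : EuclideanSpace ℝ (Fin 3), k ≠ 0 →
        (∫ u in {u : EuclideanSpace ℝ (Fin 3) | ‖u‖ ≤ 2 * R},
            (lam^2 + (inner ℝ u k : ℝ)^2)⁻¹)
          ≤ C * lam ^ (-(4:ℝ)/3) * ‖k‖ ^ (-(2:ℝ)/3) := by
  have hball : {u : EuclideanSpace ℝ (Fin 3) | ‖u‖ ≤ 2 * R} = closedBall 0 (2 * R) := by
    ext u
    simp
  refine ⟨2 * (2 * (2 * R)) ^ (finrank ℝ (EuclideanSpace ℝ (Fin 3)) - 1)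
    + volume.real (closedBall (0 : EuclideanSpace ℝ (Fin 3)) (2 * R)), by positivity, ?_⟩
  intro lam hlam k hk
  rw [hball]
  exact setIntegral_closedBall_inv_sq_add_inner_sq_le_rpow (by positivity) hlam hk
end

section
/- For every R > 0 there exists a constant C_R > 0 such that for every λ > 0 and every nonzero k ∈ ℝ³, ∫_{{u ∈ ℝ³ : |u| ≤ 2R}} (λ² + (u·k)²)^{-2} du ≤ C_R λ^{-16/5} |k|^{-4/5}. -/
/-!
By weighted AM–GM, `λ² + b² ≥ (λ²)^(4/5) (b²)^(1/5)`, so the integrand is at most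
`λ^(-16/5) |u·k|^(-4/5)` off the null hyperplane `u·k = 0`. A rotation of the ball taking `k` to
`|k| e₀` turns `|u·k|^(-4/5)` into `|k|^(-4/5) |u₀|^(-4/5)`, and `|u₀|^(-4/5)` is integrable on
the ball because `t ↦ |t|^(-4/5)` is locally integrable on `ℝ`.
-/

open Real MeasureTheory Set Metric

theorem intervalIntegrable_abs_rpow {r : ℝ} (hr : -1 < r) (a b : ℝ) :
    IntervalIntegrable (fun t : ℝ => |t| ^ r) volume a b := by
  suffices h : ∀ c, IntervalIntegrable (fun t : ℝ => |t| ^ r) volume 0 c from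
    (h a).symm.trans (h b)
  have hpos : ∀ c, 0 ≤ c → IntervalIntegrable (fun t : ℝ => |t| ^ r) volume 0 c :=
    fun c hc => (intervalIntegral.intervalIntegrable_rpow' hr).congr fun t ht => by
      rw [uIoc_of_le hc] at ht
      simp only [abs_of_pos ht.1]
  intro c
  rcases le_total 0 c with hc | hc
  · exact hpos c hc
  · rw [IntervalIntegrable.iff_comp_neg, neg_zero]
    simpa only [abs_neg] using hpos (-c) (by linarith)

theorem integrableOn_abs_rpow_Icc {r : ℝ} (hr : -1 < r) (a b : ℝ) :
    IntegrableOn (fun t : ℝ => |t| ^ r) (Icc a b) :=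
  ((intervalIntegrable_iff' (by finiteness)).mp (intervalIntegrable_abs_rpow hr a b)).mono_set
    Icc_subset_uIcc

theorem EuclideanSpace.integrableOn_closedBall_comp_apply {ι F : Type*} [Fintype ι]
    [NormedAddCommGroup F] {f : ℝ → F} {ρ : ℝ} (hf : IntegrableOn f (Icc (-ρ) ρ)) (i : ι) :
    IntegrableOn (fun u : EuclideanSpace ℝ ι => f (u i)) (closedBall 0 ρ) := by
  have hcube : IntegrableOn (fun x : ι → ℝ => f (x i)) (univ.pi fun _ => Icc (-ρ) ρ) := by
    have : IsFiniteMeasure (volume.restrict (Icc (-ρ) ρ)) :=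
      isFiniteMeasure_restrict.mpr measure_Icc_lt_top.ne
    rw [IntegrableOn, volume_pi, Measure.restrict_pi_pi]
    exact integrable_comp_eval hf
  refine ((EuclideanSpace.volume_preserving_symm_measurableEquiv_toLp ι).integrableOn_comp_preimage
    (MeasurableEquiv.measurableEmbedding _)).mpr hcube |>.mono_set fun u hu j _ => ?_
  exact abs_le.mp ((PiLp.norm_apply_le u j).trans (mem_closedBall_zero_iff.mp hu))

section InnerProductSpace

variable {E : Type*} [NormedAddCommGroup E] [InnerProductSpace ℝ E] [FiniteDimensional ℝ E]
  [MeasurableSpace E] [BorelSpace E]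

theorem setIntegral_closedBall_comp_inner_of_norm_eq {F : Type*} [NormedAddCommGroup F]
    [NormedSpace ℝ F] {v w : E} (h : ‖v‖ = ‖w‖) (g : ℝ → F) (ρ : ℝ) :
    ∫ u in closedBall 0 ρ, g (inner ℝ u v) = ∫ u in closedBall 0 ρ, g (inner ℝ u w) := by
  set T := (ℝ ∙ (w - v))ᗮ.reflection
  have hTw : T w = v := Submodule.reflection_sub h.symm
  rw [← T.measurePreserving.setIntegral_preimage_emb T.toHomeomorph.measurableEmbedding,
    T.preimage_closedBall, map_zero]
  simp_rw [← hTw, LinearIsometryEquiv.inner_map_map]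

theorem ae_inner_ne_zero {v : E} (hv : v ≠ 0) : ∀ᵐ u : E, inner ℝ u v ≠ 0 := by
  have hker : {u : E | inner ℝ u v = 0} = (ℝ ∙ v)ᗮ := by
    ext u
    exact Submodule.mem_orthogonal_singleton_iff_inner_left.symm
  have hproper : (ℝ ∙ v)ᗮ ≠ ⊤ := fun htop => hv <| inner_self_eq_zero.mp <|
    Submodule.mem_orthogonal_singleton_iff_inner_left.mp (htop ▸ Submodule.mem_top)
  simpa [ae_iff, hker] using Measure.addHaar_submodule volume _ hproper

end InnerProductSpace

namespace EuclideanSpace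

variable {ι : Type*} [Fintype ι] [DecidableEq ι]

theorem setIntegral_closedBall_comp_inner {F : Type*} [NormedAddCommGroup F] [NormedSpace ℝ F]
    (g : ℝ → F) (k : EuclideanSpace ℝ ι) (i : ι) (ρ : ℝ) :
    ∫ u in closedBall (0 : EuclideanSpace ℝ ι) ρ, g (inner ℝ u k)
      = ∫ u in closedBall (0 : EuclideanSpace ℝ ι) ρ, g (‖k‖ * u i) := by
  have hinner : ∀ u : EuclideanSpace ℝ ι,
      inner ℝ u (‖k‖ • single i 1) = ‖k‖ * u i := fun u => by
    simp [inner_smul_right, inner_single_right]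
  rw [setIntegral_closedBall_comp_inner_of_norm_eq (w := ‖k‖ • single i 1)
    (by simp [norm_smul])]
  simp only [hinner]

theorem ae_apply_ne_zero (i : ι) : ∀ᵐ u : EuclideanSpace ℝ ι, u i ≠ 0 := by
  have hsingle : single i (1 : ℝ) ≠ 0 := by simp [single]
  simpa [inner_single_right] using ae_inner_ne_zero hsingle

end EuclideanSpace

theorem inv_sq_add_sq_sq_le {a b θ : ℝ} (ha : 0 < a) (hb : b ≠ 0) (hθ₀ : 0 ≤ θ) (hθ₁ : θ ≤ 1) :
    ((a ^ 2 + b ^ 2) ^ 2)⁻¹ ≤ a ^ (-4 * (1 - θ)) * |b| ^ (-4 * θ) := by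
  have hb' : 0 < |b| := abs_pos.mpr hb
  have hamgm : a ^ (2 * (1 - θ)) * |b| ^ (2 * θ) ≤ a ^ 2 + b ^ 2 := by
    have h := geom_mean_le_arith_mean2_weighted (sub_nonneg.mpr hθ₁) hθ₀ (sq_nonneg a)
      (sq_nonneg |b|) (sub_add_cancel 1 θ)
    have hpow : ∀ x : ℝ, 0 ≤ x → ∀ s : ℝ, (x ^ 2) ^ s = x ^ (2 * s) := fun x hx s => by
      rw [← rpow_natCast, ← rpow_mul hx, Nat.cast_ofNat]
    rw [hpow a ha.le, hpow |b| hb'.le, sq_abs] at h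
    nlinarith [sq_nonneg a, sq_nonneg b]
  calc ((a ^ 2 + b ^ 2) ^ 2)⁻¹ = (a ^ 2 + b ^ 2) ^ (-2 : ℝ) := by
        rw [rpow_neg (by positivity), ← rpow_natCast]; norm_num
    _ ≤ (a ^ (2 * (1 - θ)) * |b| ^ (2 * θ)) ^ (-2 : ℝ) :=
        rpow_le_rpow_of_nonpos (by positivity) hamgm (by norm_num)
    _ = a ^ (-4 * (1 - θ)) * |b| ^ (-4 * θ) := by
        rw [mul_rpow (by positivity) (by positivity), ← rpow_mul ha.le, ← rpow_mul hb'.le]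
        ring_nf

theorem inv_sq_add_mul_sq_sq_le {a c x : ℝ} (ha : 0 < a) (hc : 0 < c) (hx : x ≠ 0) :
    ((a ^ 2 + (c * x) ^ 2) ^ 2)⁻¹ ≤ a ^ (-(16:ℝ)/5) * c ^ (-(4:ℝ)/5) * |x| ^ (-(4:ℝ)/5) := by
  have h := inv_sq_add_sq_sq_le ha (mul_ne_zero hc.ne' hx) (θ := 1/5) (by norm_num) (by norm_num)
  rw [abs_mul, abs_of_pos hc, mul_rpow hc.le (abs_nonneg x), ← mul_assoc] at h
  convert h using 3 <;> norm_num

theorem stmt15_general (R : ℝ) :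
    ∃ C : ℝ, 0 < C ∧ ∀ lam : ℝ, 0 < lam →
      ∀ k : EuclideanSpace ℝ (Fin 3), k ≠ 0 →
        (∫ u in {u : EuclideanSpace ℝ (Fin 3) | ‖u‖ ≤ 2 * R},
            ((lam^2 + (inner ℝ u k : ℝ)^2)^2)⁻¹)
          ≤ C * lam ^ (-(16:ℝ)/5) * ‖k‖ ^ (-(4:ℝ)/5) := by
  set B := closedBall (0 : EuclideanSpace ℝ (Fin 3)) (2 * R)
  have hball : {u : EuclideanSpace ℝ (Fin 3) | ‖u‖ ≤ 2 * R} = B := by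
    ext u
    simp [B]
  set I := ∫ u in B, |u 0| ^ (-(4:ℝ)/5)
  have hI : 0 ≤ I := integral_nonneg fun u => rpow_nonneg (abs_nonneg _) _
  refine ⟨I + 1, by positivity, fun lam hlam k hk => ?_⟩
  have hint : IntegrableOn (fun u : EuclideanSpace ℝ (Fin 3) => |u 0| ^ (-(4:ℝ)/5)) B :=
    EuclideanSpace.integrableOn_closedBall_comp_apply
      (integrableOn_abs_rpow_Icc (by norm_num) _ _) 0
  have hbound : ∀ᵐ u ∂volume.restrict B, ((lam ^ 2 + (‖k‖ * u 0) ^ 2) ^ 2)⁻¹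
      ≤ lam ^ (-(16:ℝ)/5) * ‖k‖ ^ (-(4:ℝ)/5) * |u 0| ^ (-(4:ℝ)/5) := by
    filter_upwards [ae_restrict_of_ae (EuclideanSpace.ae_apply_ne_zero 0)] with u hu
      using inv_sq_add_mul_sq_sq_le hlam (norm_pos_iff.mpr hk) hu
  calc _ = ∫ u in B, ((lam ^ 2 + (‖k‖ * u 0) ^ 2) ^ 2)⁻¹ := by
        rw [hball, EuclideanSpace.setIntegral_closedBall_comp_inner
          (fun t => ((lam ^ 2 + t ^ 2) ^ 2)⁻¹)]
    _ ≤ ∫ u in B, lam ^ (-(16:ℝ)/5) * ‖k‖ ^ (-(4:ℝ)/5) * |u 0| ^ (-(4:ℝ)/5) :=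
        integral_mono_of_nonneg (.of_forall fun u => by positivity) (hint.const_mul _) hbound
    _ = lam ^ (-(16:ℝ)/5) * ‖k‖ ^ (-(4:ℝ)/5) * I := integral_const_mul _ _
    _ ≤ (I + 1) * lam ^ (-(16:ℝ)/5) * ‖k‖ ^ (-(4:ℝ)/5) := by
        have : 0 < lam ^ (-(16:ℝ)/5) * ‖k‖ ^ (-(4:ℝ)/5) := by positivity
        nlinarith

/-- `∫_{|u|≤2R} (λ² + (u·k)²)⁻² du ≤ C_R λ^{-16/5}|k|^{-4/5}`. -/
theorem stmt15 (R : ℝ) (hR : 0 < R) :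
    ∃ C : ℝ, 0 < C ∧ ∀ lam : ℝ, 0 < lam →
      ∀ k : EuclideanSpace ℝ (Fin 3), k ≠ 0 →
        (∫ u in {u : EuclideanSpace ℝ (Fin 3) | ‖u‖ ≤ 2 * R},
            ((lam^2 + (inner ℝ u k : ℝ)^2)^2)⁻¹)
          ≤ C * lam ^ (-(16:ℝ)/5) * ‖k‖ ^ (-(4:ℝ)/5) :=
  stmt15_general R
end

section
/- Let Ω ⊂ ℝ³ be a nonempty connected open set and μ(v) = (2π)^{-3/2}exp(-|v|²/2). Let a : (0,1)×Ω → ℝ, b : (0,1)×Ω → ℝ³ and c : (0,1)×Ω → ℝ be smooth functions and set Z(t,x,v) = ( a(t,x) + b(t,x)·v + c(t,x)|v|² ) μ^{1/2}(v). Suppose Z solves the free transport equation ∂_t Z + v·∇_x Z = 0 for all (t,x,v) ∈ (0,1)×Ω×ℝ³. Then there exist constants a₀, c₀, c₁, c₂ ∈ ℝ and constant vectors b₀, b₁, ϖ ∈ ℝ³ such that for all (t,x) ∈ (0,1)×Ω: a(t,x) = (c₀/2)|x|² - b₀·x + a₀, b(t,x) = -c₀ t x - c₁ x + ϖ × x +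 b₀ t + b₁, and c(t,x) = (c₀/2) t² + c₁ t + c₂. -/
open Real MeasureTheory

noncomputable section

abbrev E3 := EuclideanSpace ℝ (Fin 3)
abbrev P4 := ℝ × E3

/-- directional derivative -/
def Dd (w : P4) (f : P4 → ℝ) : P4 → ℝ := fun p => fderiv ℝ f p w

def et : P4 := (1, 0)
def ex (i : Fin 3) : P4 := (0, EuclideanSpace.single i (1:ℝ))

lemma eucl_sum (x : E3) : x = ∑ i, x i • EuclideanSpace.single i (1:ℝ) := by
  ext j
  rw [show (∑ i, x i • EuclideanSpace.single i (1:ℝ)) j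
      = ∑ i, (x i • EuclideanSpace.single i (1:ℝ)) j from by rw [WithLp.ofLp_sum]; exact Finset.sum_apply j _ _]
  simp [EuclideanSpace.single_apply]

lemma clm_eq_zero (L : P4 →L[ℝ] ℝ) (h0 : L et = 0) (h : ∀ i, L (ex i) = 0) : L = 0 := by
  apply ContinuousLinearMap.ext
  intro z
  obtain ⟨t, x⟩ := z
  have hz : ((t, x) : P4) = t • et + ∑ i, x i • ex i := by
    have h1 : (∑ i, x i • ex i) = ((0:ℝ), ∑ i, x i • EuclideanSpace.single i (1:ℝ)) := by
      rw [Prod.ext_iff]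
      constructor
      · simp [ex, Prod.fst_sum]
      · simp [ex, Prod.snd_sum]
    rw [h1, ← eucl_sum x]
    simp [et, Prod.ext_iff]
  rw [hz]
  simp [h0, h]

lemma diffAt {U : Set P4} (hU : IsOpen U) {f : P4 → ℝ} (hf : ContDiffOn ℝ (⊤ : ℕ∞) f U) {p : P4}
    (hp : p ∈ U) : DifferentiableAt ℝ f p :=
  (hf.contDiffAt (hU.mem_nhds hp)).differentiableAt (by simp)

lemma Dd_smooth {U : Set P4} (hU : IsOpen U) {f : P4 → ℝ} (hf : ContDiffOn ℝ (⊤ : ℕ∞) f U) (w : P4) :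
    ContDiffOn ℝ (⊤ : ℕ∞) (Dd w f) U :=
  (hf.fderiv_of_isOpen hU (by simp)).clm_apply contDiffOn_const

lemma Dd_symm {U : Set P4} (hU : IsOpen U) {f : P4 → ℝ} (hf : ContDiffOn ℝ (⊤ : ℕ∞) f U) (u w : P4)
    {p : P4} (hp : p ∈ U) : Dd u (Dd w f) p = Dd w (Dd u f) p := by
  have hev : ∀ᶠ y in nhds p, HasFDerivAt f (fderiv ℝ f y) y :=
    Filter.eventually_of_mem (hU.mem_nhds hp) fun y hy => (diffAt hU hf hy).hasFDerivAt
  have hf' : DifferentiableAt ℝ (fderiv ℝ f) p :=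
    ((hf.fderiv_of_isOpen (m := (⊤ : ℕ∞)) hU (by simp)).contDiffAt (hU.mem_nhds hp)).differentiableAt (by simp)
  have hsymm := second_derivative_symmetric_of_eventually hev hf'.hasFDerivAt u w
  have key : ∀ v₁ v₂ : P4, Dd v₁ (Dd v₂ f) p = fderiv ℝ (fderiv ℝ f) p v₁ v₂ := by
    intro v₁ v₂
    unfold Dd
    rw [fderiv_clm_apply hf' (differentiableAt_const _)]
    simp
  rw [key, key, hsymm]

lemma Dd_congr {U : Set P4} (hU : IsOpen U) {f g : P4 → ℝ} {p : P4} (hp : p ∈ U) (w : P4)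
    (h : ∀ q ∈ U, f q = g q) : Dd w f p = Dd w g p := by
  unfold Dd
  rw [Filter.EventuallyEq.fderiv_eq (Filter.eventually_of_mem (hU.mem_nhds hp) h)]

lemma Dd_zero_of_zero {U : Set P4} (hU : IsOpen U) {f : P4 → ℝ} {p : P4} (hp : p ∈ U) (w : P4)
    (h : ∀ q ∈ U, f q = 0) : Dd w f p = 0 := by
  rw [Dd_congr hU hp w h, show ((fun _ : P4 => (0:ℝ))) = (fun _ => (0:ℝ)) from rfl]
  simp [Dd]
lemma const_ball {U : Set P4} {f : P4 → ℝ}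
    (hdiff : ∀ p ∈ U, DifferentiableAt ℝ f p)
    (h0 : ∀ p ∈ U, fderiv ℝ f p = 0) {z y : P4} {ε : ℝ}
    (hball : Metric.ball z ε ⊆ U) (hy : y ∈ Metric.ball z ε) (hz : z ∈ Metric.ball z ε) :
    f y = f z := by
  apply (convex_ball z ε).is_const_of_fderivWithin_eq_zero
    (fun w hw => (hdiff w (hball hw)).differentiableWithinAt)
    (fun w hw => ?_) hy hz
  rw [fderivWithin_of_isOpen Metric.isOpen_ball hw]
  exact h0 w (hball hw)

lemma const_on {U : Set P4} (hU : IsOpen U) (hconn : IsPreconnected U) {f : P4 → ℝ}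
    (hdiff : ∀ p ∈ U, DifferentiableAt ℝ f p)
    (h0 : ∀ p ∈ U, fderiv ℝ f p = 0) {p q : P4} (hp : p ∈ U) (hq : q ∈ U) : f p = f q := by
  by_contra hne
  set A : Set P4 := {z | z ∈ U ∧ f z = f q} with hA
  set B : Set P4 := {z | z ∈ U ∧ f z ≠ f q} with hB
  have key : ∀ z ∈ U, ∃ ε > 0, Metric.ball z ε ⊆ U ∧ ∀ y ∈ Metric.ball z ε, f y = f z := by
    intro z hz
    obtain ⟨ε, hε, hball⟩ := Metric.isOpen_iff.1 hU z hz
    exact ⟨ε, hε, hball, fun y hy =>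
      const_ball hdiff h0 hball hy (Metric.mem_ball_self hε)⟩
  have hAopen : IsOpen A := by
    rw [Metric.isOpen_iff]
    rintro z ⟨hz, hfz⟩
    obtain ⟨ε, hε, hball, hconst⟩ := key z hz
    exact ⟨ε, hε, fun y hy => ⟨hball hy, (hconst y hy).trans hfz⟩⟩
  have hBopen : IsOpen B := by
    rw [Metric.isOpen_iff]
    rintro z ⟨hz, hfz⟩
    obtain ⟨ε, hε, hball, hconst⟩ := key z hz
    exact ⟨ε, hε, fun y hy => ⟨hball hy, (hconst y hy).symm ▸ hfz⟩⟩
  obtain ⟨w, hwU, hwA, hwB⟩ := hconn A B hAopen hBopen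
    (fun z hz => by by_cases h : f z = f q
                    · exact Or.inl ⟨hz, h⟩
                    · exact Or.inr ⟨hz, h⟩)
    ⟨q, hq, hq, rfl⟩ ⟨p, hp, hp, hne⟩
  exact hwB.2 hwA.2
lemma slice_t {U : Set P4} (hU : IsOpen U) {f : P4 → ℝ} (hf : ContDiffOn ℝ (⊤ : ℕ∞) f U)
    {t : ℝ} {x : E3} (hp : (t, x) ∈ U) :
    HasDerivAt (fun τ => f (τ, x)) (Dd et f (t, x)) t := by
  have h1 : HasDerivAt (fun τ : ℝ => ((τ, x) : P4)) et t := by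
    exact (hasDerivAt_id t).prodMk (hasDerivAt_const t x)
  exact (diffAt hU hf hp).hasFDerivAt.comp_hasDerivAt t h1

lemma slice_x {U : Set P4} (hU : IsOpen U) {f : P4 → ℝ} (hf : ContDiffOn ℝ (⊤ : ℕ∞) f U)
    {t : ℝ} {x : E3} (hp : (t, x) ∈ U) (i : Fin 3) :
    HasDerivAt (fun τ : ℝ => f (t, x + τ • EuclideanSpace.single i (1:ℝ)))
      (Dd (ex i) f (t, x)) 0 := by
  set sb : E3 := EuclideanSpace.single i (1:ℝ) with hsb
  have h2 : HasDerivAt (fun τ : ℝ => x + τ • sb) sb 0 := by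
    have := ((hasDerivAt_id (0:ℝ)).smul_const sb).const_add x
    simpa using this
  have h1 : HasDerivAt (fun τ : ℝ => ((t, x + τ • sb) : P4)) (ex i) 0 :=
    (hasDerivAt_const (0:ℝ) t).prodMk h2
  have hpt : ((t, x + (0:ℝ) • sb) : P4) = (t, x) := by simp
  have hF : HasFDerivAt f (fderiv ℝ f (t, x)) ((fun τ : ℝ => ((t, x + τ • sb) : P4)) 0) := by
    rw [show (fun τ : ℝ => ((t, x + τ • sb) : P4)) 0 = ((t,x) : P4) from hpt]
    exact (diffAt hU hf hp).hasFDerivAt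
  exact hF.comp_hasDerivAt 0 h1

lemma inner_expand (u v : E3) : (inner ℝ u v : ℝ) = ∑ k, u k * v k := by
  simp [PiLp.inner_apply, RCLike.inner_apply, conj_trivial]
  exact Finset.sum_congr rfl fun _ _ => mul_comm _ _

lemma cubic_zero {α β γ δ : ℝ} (h : ∀ s : ℝ, α + β*s + γ*s^2 + δ*s^3 = 0) :
    α = 0 ∧ β = 0 ∧ γ = 0 ∧ δ = 0 := by
  have h0 := h 0; have h1 := h 1; have h2 := h (-1); have h3 := h 2
  norm_num at h0 h1 h2 h3
  refine ⟨h0, by linarith, by linarith, by linarith⟩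

lemma Mxw_sqrt_pos (v : E3) : 0 < Real.sqrt ((2 * Real.pi) ^ (-(3:ℝ)/2) * Real.exp (-‖v‖^2 / 2)) := by
  apply Real.sqrt_pos.2
  positivity
lemma relations {U : Set P4} {A C : P4 → ℝ} {B : Fin 3 → P4 → ℝ}
    (hpoly : ∀ p ∈ U, ∀ v : E3,
      Dd et A p + (∑ k, Dd et (B k) p * v k) + Dd et C p * ‖v‖^2
      + ∑ i, v i * (Dd (ex i) A p + (∑ k, Dd (ex i) (B k) p * v k)
          + Dd (ex i) C p * ‖v‖^2) = 0)
    {p : P4} (hp : p ∈ U) :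
    Dd et A p = 0 ∧ (∀ k, Dd et (B k) p + Dd (ex k) A p = 0)
    ∧ (∀ k, Dd et C p + Dd (ex k) (B k) p = 0)
    ∧ (∀ j k, j ≠ k → Dd (ex j) (B k) p + Dd (ex k) (B j) p = 0)
    ∧ (∀ k, Dd (ex k) C p = 0) := by
  have case1 : ∀ i : Fin 3, Dd et A p = 0 ∧ (Dd et (B i) p + Dd (ex i) A p) = 0
      ∧ (Dd et C p + Dd (ex i) (B i) p) = 0 ∧ Dd (ex i) C p = 0 := by
    intro i
    apply cubic_zero
    intro s
    have h := hpoly p hp (s • EuclideanSpace.single i (1:ℝ))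
    rw [show ‖s • EuclideanSpace.single i (1:ℝ)‖^2 = s^2 by
      simp [norm_smul, EuclideanSpace.norm_single, mul_pow, sq_abs]] at h
    simp only [PiLp.smul_apply, EuclideanSpace.single_apply, smul_eq_mul, mul_ite,
      ite_mul, mul_one, mul_zero, zero_mul, Finset.sum_ite_eq, Finset.sum_ite_eq',
      Finset.mem_univ, if_true] at h
    linear_combination h
  have case2 : ∀ i j : Fin 3, i ≠ j →
      (2*Dd et C p + Dd (ex i) (B i) p + Dd (ex i) (B j) p
        + Dd (ex j) (B i) p + Dd (ex j) (B j) p) = 0 := by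
    intro i j hij
    have hcub := cubic_zero (α := Dd et A p)
      (β := Dd et (B i) p + Dd et (B j) p + Dd (ex i) A p + Dd (ex j) A p)
      (γ := 2*Dd et C p + Dd (ex i) (B i) p + Dd (ex i) (B j) p
        + Dd (ex j) (B i) p + Dd (ex j) (B j) p)
      (δ := 2*(Dd (ex i) C p + Dd (ex j) C p)) ?_
    · exact hcub.2.2.1
    intro s
    have h := hpoly p hp (s • (EuclideanSpace.single i (1:ℝ) + EuclideanSpace.single j 1))
    rw [show ‖s • (EuclideanSpace.single i (1:ℝ) + EuclideanSpace.single j 1)‖^2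
        = s^2 * 2 by
      rw [norm_smul, mul_pow]
      rw [show ‖(EuclideanSpace.single i (1:ℝ) + EuclideanSpace.single j 1)‖^2 = 2 by
        rw [@norm_add_sq_real]
        simp [EuclideanSpace.inner_single_left, EuclideanSpace.single_apply, hij.symm]
        norm_num]
      simp [sq_abs]] at h
    simp only [PiLp.smul_apply, PiLp.add_apply, EuclideanSpace.single_apply, smul_eq_mul,
      mul_ite, ite_mul, mul_one, mul_zero, zero_mul, mul_add, add_mul,
      Finset.sum_add_distrib, Finset.sum_ite_eq, Finset.sum_ite_eq',
      Finset.mem_univ, if_true] at h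
    linear_combination h
  refine ⟨(case1 0).1, fun k => (case1 k).2.1, fun k => (case1 k).2.2.1, ?_, fun k => (case1 k).2.2.2⟩
  intro j k hjk
  have h2 := case2 j k hjk
  have hj := (case1 j).2.2.1
  have hk := (case1 k).2.2.1
  linarith

lemma Dd_addf {f g : P4 → ℝ} {p : P4} (hf : DifferentiableAt ℝ f p)
    (hg : DifferentiableAt ℝ g p) (w : P4) :
    Dd w (fun q => f q + g q) p = Dd w f p + Dd w g p := by
  unfold Dd; rw [fderiv_fun_add hf hg]; rfl

lemma Dd_subf {f g : P4 → ℝ} {p : P4} (hf : DifferentiableAt ℝ f p)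
    (hg : DifferentiableAt ℝ g p) (w : P4) :
    Dd w (fun q => f q - g q) p = Dd w f p - Dd w g p := by
  unfold Dd; rw [fderiv_fun_sub hf hg]; rfl

lemma Dd_negf {f : P4 → ℝ} {p : P4} (w : P4) :
    Dd w (fun q => -(f q)) p = -(Dd w f p) := by
  unfold Dd; rw [fderiv_fun_neg]; rfl

lemma Dd_const_mulf {f : P4 → ℝ} {p : P4} (hf : DifferentiableAt ℝ f p) (k : ℝ) (w : P4) :
    Dd w (fun q => k * f q) p = k * Dd w f p := by
  unfold Dd; rw [fderiv_const_mul hf]; rfl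

lemma Dd_mulf {f g : P4 → ℝ} {p : P4} (hf : DifferentiableAt ℝ f p)
    (hg : DifferentiableAt ℝ g p) (w : P4) :
    Dd w (fun q => f q * g q) p = f p * Dd w g p + g p * Dd w f p := by
  unfold Dd; rw [fderiv_fun_mul hf hg]; simp

lemma Dd_constf (k : ℝ) (p w : P4) : Dd w (fun _ => k) p = 0 := by
  unfold Dd; rw [fderiv_fun_const]; rfl

lemma Dd_sumf {f : Fin 3 → P4 → ℝ} {p : P4} (hf : ∀ r, DifferentiableAt ℝ (f r) p) (w : P4) :
    Dd w (fun q => ∑ r, f r q) p = ∑ r, Dd w (f r) p := by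
  unfold Dd
  rw [fderiv_fun_sum (fun r _ => hf r)]
  simp

lemma dfst {p : P4} : DifferentiableAt ℝ (fun q : P4 => q.1) p := differentiableAt_fst

lemma dsnd {p : P4} (j : Fin 3) : DifferentiableAt ℝ (fun q : P4 => q.2 j) p :=
  ((EuclideanSpace.proj j).comp (ContinuousLinearMap.snd ℝ ℝ E3)).differentiableAt

lemma Dd_fst (w p : P4) : Dd w (fun q : P4 => q.1) p = w.1 := by
  unfold Dd
  rw [show (fun q : P4 => q.1) = fun q : P4 => (ContinuousLinearMap.fst ℝ ℝ E3) q from rfl,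
    ContinuousLinearMap.fderiv]
  rfl

lemma Dd_snd (j : Fin 3) (w p : P4) : Dd w (fun q : P4 => q.2 j) p = w.2 j := by
  unfold Dd
  rw [show (fun q : P4 => q.2 j)
      = fun q : P4 => ((EuclideanSpace.proj j).comp (ContinuousLinearMap.snd ℝ ℝ E3)) q from rfl,
    ContinuousLinearMap.fderiv]
  rfl

lemma et_fst : (et).1 = 1 := rfl
lemma et_snd (j : Fin 3) : (et).2 j = 0 := rfl
lemma ex_fst (i : Fin 3) : (ex i).1 = 0 := rfl
lemma ex_snd (i j : Fin 3) : (ex i).2 j = if j = i then 1 else 0 := EuclideanSpace.single_apply i 1 j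

lemma main_core {U : Set P4} (hU : IsOpen U) (hUc : IsPreconnected U) {p₀ : P4} (hp₀ : p₀ ∈ U)
    {A C : P4 → ℝ} {B : Fin 3 → P4 → ℝ}
    (hA : ContDiffOn ℝ (⊤ : ℕ∞) A U) (hB : ∀ k, ContDiffOn ℝ (⊤ : ℕ∞) (B k) U) (hC : ContDiffOn ℝ (⊤ : ℕ∞) C U)
    (R0 : ∀ p ∈ U, Dd et A p = 0)
    (R1 : ∀ p ∈ U, ∀ k, Dd et (B k) p + Dd (ex k) A p = 0)
    (R2 : ∀ p ∈ U, ∀ k, Dd et C p + Dd (ex k) (B k) p = 0)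
    (R3 : ∀ p ∈ U, ∀ j k, j ≠ k → Dd (ex j) (B k) p + Dd (ex k) (B j) p = 0)
    (R4 : ∀ p ∈ U, ∀ k, Dd (ex k) C p = 0) :
    ∃ (a₀ c₀ c₁ c₂ : ℝ) (b₀ b₁ : Fin 3 → ℝ) (W : Fin 3 → Fin 3 → ℝ),
      (∀ j k, W j k = -W k j) ∧
      ∀ p ∈ U,
        (A p = c₀/2 * (∑ r, p.2 r * p.2 r) - (∑ r, b₀ r * p.2 r) + a₀) ∧
        (∀ k, B k p = -(c₀*p.1 + c₁) * p.2 k + (∑ r, W k r * p.2 r) + p.1 * b₀ k + b₁ k) ∧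
        (C p = c₀/2 * p.1^2 + c₁*p.1 + c₂) := by
  have sDtC := Dd_smooth hU hC et
  have sDxA := fun i => Dd_smooth hU hA (ex i)
  have sK := Dd_smooth hU sDtC et
  -- basic vanishing facts
  have c_x : ∀ p ∈ U, ∀ i, Dd (ex i) (Dd et C) p = 0 := fun p hp i =>
    (Dd_symm hU hC (ex i) et hp).trans
      (Dd_zero_of_zero hU hp et (fun q hq => R4 q hq i))
  have a_t : ∀ p ∈ U, ∀ w, Dd w (Dd et A) p = 0 := fun p hp w =>
    Dd_zero_of_zero hU hp w (fun q hq => R0 q hq)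
  have a_tx : ∀ p ∈ U, ∀ i, Dd et (Dd (ex i) A) p = 0 := fun p hp i =>
    (Dd_symm hU hA et (ex i) hp).trans (a_t p hp (ex i))
  -- derivative transfer along the relations
  have hB_t : ∀ k, ∀ p ∈ U, ∀ w, Dd w (Dd et (B k)) p = -(Dd w (Dd (ex k) A) p) := by
    intro k p hp w
    rw [Dd_congr hU hp w (g := fun q => -(Dd (ex k) A q))
      (fun q hq => by have := R1 q hq k; show Dd et (B k) q = -(Dd (ex k) A q); linarith)]
    exact Dd_negf w
  have hA_x : ∀ k, ∀ p ∈ U, ∀ w, Dd w (Dd (ex k) A) p = -(Dd w (Dd et (B k)) p) := by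
    intro k p hp w
    rw [Dd_congr hU hp w (g := fun q => -(Dd et (B k) q))
      (fun q hq => by have := R1 q hq k; show Dd (ex k) A q = -(Dd et (B k) q); linarith)]
    exact Dd_negf w
  have hBx_diag : ∀ k, ∀ p ∈ U, ∀ w, Dd w (Dd (ex k) (B k)) p = -(Dd w (Dd et C) p) := by
    intro k p hp w
    rw [Dd_congr hU hp w (g := fun q => -(Dd et C q))
      (fun q hq => by have := R2 q hq k; show Dd (ex k) (B k) q = -(Dd et C q); linarith)]
    exact Dd_negf w
  have hBx_off : ∀ j k, j ≠ k → ∀ p ∈ U, ∀ w,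
      Dd w (Dd (ex j) (B k)) p = -(Dd w (Dd (ex k) (B j)) p) := by
    intro j k hjk p hp w
    rw [Dd_congr hU hp w (g := fun q => -(Dd (ex k) (B j) q))
      (fun q hq => by have := R3 q hq j k hjk
                      show Dd (ex j) (B k) q = -(Dd (ex k) (B j) q); linarith)]
    exact Dd_negf w
  -- Hessian of A
  have H_eq : ∀ i j, ∀ p ∈ U, Dd (ex i) (Dd (ex j) A) p = -(Dd et (Dd (ex i) (B j)) p) := by
    intro i j p hp
    rw [hA_x j p hp (ex i), Dd_symm hU (hB j) (ex i) et hp]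
  have H_symm : ∀ i j, ∀ p ∈ U,
      Dd (ex i) (Dd (ex j) A) p = Dd (ex j) (Dd (ex i) A) p := fun i j p hp =>
    Dd_symm hU hA (ex i) (ex j) hp
  have K_sym : ∀ i, ∀ p ∈ U, Dd (ex i) (Dd (ex i) A) p = Dd et (Dd et C) p := by
    intro i p hp
    rw [H_eq i i p hp, hBx_diag i p hp et]
    ring
  have H_off : ∀ i j, i ≠ j → ∀ p ∈ U, Dd (ex i) (Dd (ex j) A) p = 0 := by
    intro i j hij p hp
    have h1 := H_eq i j p hp
    have h2 := H_eq j i p hp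
    have h3 := H_symm i j p hp
    have h4 := hBx_off i j hij p hp et
    linarith
  have N_off : ∀ i j, i ≠ j → ∀ p ∈ U, Dd et (Dd (ex i) (B j)) p = 0 := by
    intro i j hij p hp
    have h1 := H_eq i j p hp
    have h2 := H_off i j hij p hp
    linarith
  -- pure spatial second derivatives of B vanish
  have T_anti : ∀ i j k, ∀ p ∈ U,
      Dd (ex i) (Dd (ex j) (B k)) p = -(Dd (ex i) (Dd (ex k) (B j)) p) := by
    intro i j k p hp
    by_cases hjk : j = k
    · subst hjk
      have h1 := hBx_diag j p hp (ex i)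
      have h2 := c_x p hp i
      rw [h1, h2]; ring
    · exact hBx_off j k hjk p hp (ex i)
  have T_symm : ∀ i j k, ∀ p ∈ U,
      Dd (ex i) (Dd (ex j) (B k)) p = Dd (ex j) (Dd (ex i) (B k)) p := fun i j k p hp =>
    Dd_symm hU (hB k) (ex i) (ex j) hp
  have T_zero : ∀ i j k, ∀ p ∈ U, Dd (ex i) (Dd (ex j) (B k)) p = 0 := by
    intro i j k p hp
    have e1 := T_anti i j k p hp
    have s1 := T_symm i k j p hp
    have e2 := T_anti k i j p hp
    have s2 := T_symm k j i p hp
    have e3 := T_anti j k i p hp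
    have s3 := T_symm j i k p hp
    linarith
  -- K := ∂t∂t C is constant on U
  have K_dx : ∀ p ∈ U, ∀ i, Dd (ex i) (Dd et (Dd et C)) p = 0 := by
    intro p hp i
    rw [Dd_symm hU sDtC (ex i) et hp]
    exact Dd_zero_of_zero hU hp et (fun q hq => c_x q hq i)
  have K_dt : ∀ p ∈ U, Dd et (Dd et (Dd et C)) p = 0 := by
    intro p hp
    rw [Dd_congr hU hp et (g := Dd (ex 0) (Dd (ex 0) A))
      (fun q hq => (K_sym 0 q hq).symm)]
    rw [Dd_symm hU (sDxA 0) et (ex 0) hp]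
    exact Dd_zero_of_zero hU hp (ex 0) (fun q hq => a_tx q hq 0)
  have K_const : ∀ p ∈ U, Dd et (Dd et C) p = Dd et (Dd et C) p₀ := by
    intro p hp
    exact const_on hU hUc (fun q hq => diffAt hU sK hq)
      (fun q hq => clm_eq_zero _ (K_dt q hq) (fun i => K_dx q hq i)) hp hp₀
  set c₀ : ℝ := Dd et (Dd et C) p₀ with hc₀def
  set c₁ : ℝ := Dd et C p₀ - c₀ * p₀.1 with hc₁def
  -- ∂t C formula
  have DtC_form : ∀ p ∈ U, Dd et C p = c₀ * p.1 + c₁ := by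
    intro p hp
    have hconst : (fun q => Dd et C q - c₀ * q.1) p = (fun q => Dd et C q - c₀ * q.1) p₀ := by
      apply const_on hU hUc (fun q hq => (diffAt hU sDtC hq).sub (dfst.const_mul c₀))
        (fun q hq => ?_) hp hp₀
      apply clm_eq_zero
      · show Dd et (fun q => Dd et C q - c₀ * q.1) q = 0
        rw [Dd_subf (diffAt hU sDtC hq) (dfst.const_mul c₀) et,
          Dd_const_mulf dfst c₀ et, Dd_fst, et_fst, K_const q hq]
        ring
      · intro i
        show Dd (ex i) (fun q => Dd et C q - c₀ * q.1) q = 0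
        rw [Dd_subf (diffAt hU sDtC hq) (dfst.const_mul c₀) (ex i),
          Dd_const_mulf dfst c₀ (ex i), Dd_fst, ex_fst, c_x q hq i]
        ring
    simp only at hconst
    rw [hc₁def]; linarith
  -- C formula
  set c₂ : ℝ := C p₀ - (c₀/2 * p₀.1^2 + c₁ * p₀.1) with hc₂def
  have C_form : ∀ p ∈ U, C p = c₀/2 * p.1^2 + c₁*p.1 + c₂ := by
    intro p hp
    have hconst : (fun q => C q - (c₀/2 * (q.1*q.1) + c₁ * q.1)) p
        = (fun q => C q - (c₀/2 * (q.1*q.1) + c₁ * q.1)) p₀ := by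
      apply const_on hU hUc
        (fun q hq => (diffAt hU hC hq).sub
          (((dfst.mul dfst).const_mul (c₀/2)).add (dfst.const_mul c₁)))
        (fun q hq => ?_) hp hp₀
      have hd1 : DifferentiableAt ℝ (fun q : P4 => c₀/2 * (q.1*q.1) + c₁ * q.1) q :=
        ((dfst.mul dfst).const_mul (c₀/2)).add (dfst.const_mul c₁)
      apply clm_eq_zero
      · show Dd et (fun q => C q - (c₀/2 * (q.1*q.1) + c₁ * q.1)) q = 0
        rw [Dd_subf (diffAt hU hC hq) hd1 et,
          Dd_addf ((dfst.fun_mul dfst).const_mul (c₀/2)) (dfst.const_mul c₁) et,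
          Dd_const_mulf (dfst.fun_mul dfst) (c₀/2) et, Dd_mulf dfst dfst et,
          Dd_const_mulf dfst c₁ et, Dd_fst, et_fst, DtC_form q hq]
        ring
      · intro i
        show Dd (ex i) (fun q => C q - (c₀/2 * (q.1*q.1) + c₁ * q.1)) q = 0
        rw [Dd_subf (diffAt hU hC hq) hd1 (ex i),
          Dd_addf ((dfst.fun_mul dfst).const_mul (c₀/2)) (dfst.const_mul c₁) (ex i),
          Dd_const_mulf (dfst.fun_mul dfst) (c₀/2) (ex i), Dd_mulf dfst dfst (ex i),
          Dd_const_mulf dfst c₁ (ex i), Dd_fst, ex_fst, R4 q hq i]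
        ring
    simp only at hconst
    rw [hc₂def]; linear_combination hconst
  -- ∂x A formula
  set b₀ : Fin 3 → ℝ := fun j => c₀ * p₀.2 j - Dd (ex j) A p₀ with hb₀def
  have DxA_form : ∀ j, ∀ p ∈ U, Dd (ex j) A p = c₀ * p.2 j - b₀ j := by
    intro j p hp
    have hconst : (fun q => Dd (ex j) A q - c₀ * q.2 j) p
        = (fun q => Dd (ex j) A q - c₀ * q.2 j) p₀ := by
      apply const_on hU hUc
        (fun q hq => (diffAt hU (sDxA j) hq).sub ((dsnd j).const_mul c₀))
        (fun q hq => ?_) hp hp₀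
      apply clm_eq_zero
      · show Dd et (fun q => Dd (ex j) A q - c₀ * q.2 j) q = 0
        rw [Dd_subf (diffAt hU (sDxA j) hq) ((dsnd j).const_mul c₀) et,
          Dd_const_mulf (dsnd j) c₀ et, Dd_snd, et_snd, a_tx q hq j]
        ring
      · intro i
        show Dd (ex i) (fun q => Dd (ex j) A q - c₀ * q.2 j) q = 0
        rw [Dd_subf (diffAt hU (sDxA j) hq) ((dsnd j).const_mul c₀) (ex i),
          Dd_const_mulf (dsnd j) c₀ (ex i), Dd_snd, ex_snd]
        by_cases hij : i = j
        · subst hij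
          rw [K_sym i q hq, K_const q hq]
          simp
        · rw [H_off i j hij q hq, if_neg (Ne.symm hij)]
          ring
    simp only at hconst
    simp only [hb₀def]
    linear_combination hconst
  -- A formula
  set a₀ : ℝ := A p₀ - (c₀/2 * (∑ r, p₀.2 r * p₀.2 r) - ∑ r, b₀ r * p₀.2 r) with ha₀def
  have A_form : ∀ p ∈ U, A p = c₀/2 * (∑ r, p.2 r * p.2 r) - (∑ r, b₀ r * p.2 r) + a₀ := by
    intro p hp
    have hd0 : ∀ q : P4, DifferentiableAt ℝ (fun q : P4 => ∑ r, q.2 r * q.2 r) q :=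
      fun q => DifferentiableAt.fun_sum (fun r _ => (dsnd r).fun_mul (dsnd r))
    have hd1 : ∀ q : P4, DifferentiableAt ℝ (fun q : P4 => ∑ r, b₀ r * q.2 r) q :=
      fun q => DifferentiableAt.fun_sum (fun r _ => (dsnd r).const_mul (b₀ r))
    have hd2 : ∀ q : P4, DifferentiableAt ℝ
        (fun q : P4 => c₀/2 * (∑ r, q.2 r * q.2 r) - ∑ r, b₀ r * q.2 r) q :=
      fun q => (((hd0 q).const_mul (c₀/2))).sub (hd1 q)
    have hsum0 : ∀ q : P4, ∀ w, Dd w (fun q : P4 => ∑ r, q.2 r * q.2 r) q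
        = ∑ r, (q.2 r * w.2 r + q.2 r * w.2 r) := by
      intro q w
      rw [Dd_sumf (fun r => (dsnd r).fun_mul (dsnd r)) w]
      exact Finset.sum_congr rfl (fun r _ => by rw [Dd_mulf (dsnd r) (dsnd r) w, Dd_snd])
    have hsum1 : ∀ q : P4, ∀ w, Dd w (fun q : P4 => ∑ r, b₀ r * q.2 r) q
        = ∑ r, b₀ r * w.2 r := by
      intro q w
      rw [Dd_sumf (fun r => (dsnd r).const_mul (b₀ r)) w]
      exact Finset.sum_congr rfl (fun r _ => by rw [Dd_const_mulf (dsnd r) (b₀ r) w, Dd_snd])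
    have hconst : (fun q => A q - (c₀/2 * (∑ r, q.2 r * q.2 r) - ∑ r, b₀ r * q.2 r)) p
        = (fun q => A q - (c₀/2 * (∑ r, q.2 r * q.2 r) - ∑ r, b₀ r * q.2 r)) p₀ := by
      apply const_on hU hUc (fun q hq => (diffAt hU hA hq).sub (hd2 q))
        (fun q hq => ?_) hp hp₀
      apply clm_eq_zero
      · show Dd et (fun q => A q - (c₀/2 * (∑ r, q.2 r * q.2 r) - ∑ r, b₀ r * q.2 r)) q = 0
        rw [Dd_subf (diffAt hU hA hq) (hd2 q) et, R0 q hq,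
          Dd_subf ((hd0 q).const_mul (c₀/2)) (hd1 q) et,
          Dd_const_mulf (hd0 q) (c₀/2) et, hsum0 q et, hsum1 q et]
        simp [et_snd]
      · intro i
        show Dd (ex i) (fun q => A q - (c₀/2 * (∑ r, q.2 r * q.2 r) - ∑ r, b₀ r * q.2 r)) q = 0
        rw [Dd_subf (diffAt hU hA hq) (hd2 q) (ex i), DxA_form i q hq,
          Dd_subf ((hd0 q).const_mul (c₀/2)) (hd1 q) (ex i),
          Dd_const_mulf (hd0 q) (c₀/2) (ex i), hsum0 q (ex i), hsum1 q (ex i)]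
        simp only [ex_snd, mul_ite, mul_one, mul_zero, add_zero, Finset.sum_add_distrib,
          Finset.sum_ite_eq', Finset.mem_univ, if_true]
        ring
    simp only at hconst
    rw [ha₀def]
    linear_combination hconst
  -- ∂x B formula
  set Wm : Fin 3 → Fin 3 → ℝ := fun k r => Dd (ex r) (B k) p₀
      + c₀ * p₀.1 * (if r = k then 1 else 0) + c₁ * (if r = k then 1 else 0) with hWmdef
  have DxB_form : ∀ k r, ∀ p ∈ U,
      Dd (ex r) (B k) p = -(c₀ * p.1 + c₁) * (if r = k then 1 else 0) + Wm k r := by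
    intro k r p hp
    have sB : ContDiffOn ℝ (⊤ : ℕ∞) (Dd (ex r) (B k)) U := Dd_smooth hU (hB k) (ex r)
    have hconst : (fun q => Dd (ex r) (B k) q + c₀ * (if r = k then 1 else 0) * q.1) p
        = (fun q => Dd (ex r) (B k) q + c₀ * (if r = k then 1 else 0) * q.1) p₀ := by
      apply const_on hU hUc
        (fun q hq => (diffAt hU sB hq).add (dfst.const_mul (c₀ * (if r = k then 1 else 0))))
        (fun q hq => ?_) hp hp₀
      apply clm_eq_zero
      · show Dd et (fun q => Dd (ex r) (B k) q + c₀ * (if r = k then 1 else 0) * q.1) q = 0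
        rw [Dd_addf (diffAt hU sB hq) (dfst.const_mul (c₀ * (if r = k then 1 else 0))) et,
          Dd_const_mulf dfst (c₀ * (if r = k then 1 else 0)) et, Dd_fst, et_fst]
        by_cases hrk : r = k
        · subst hrk
          rw [hBx_diag r q hq et, K_const q hq, if_pos rfl]
          ring
        · rw [N_off r k hrk q hq, if_neg hrk]
          ring
      · intro i
        show Dd (ex i) (fun q => Dd (ex r) (B k) q + c₀ * (if r = k then 1 else 0) * q.1) q = 0
        rw [Dd_addf (diffAt hU sB hq) (dfst.const_mul (c₀ * (if r = k then 1 else 0))) (ex i),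
          Dd_const_mulf dfst (c₀ * (if r = k then 1 else 0)) (ex i), Dd_fst, ex_fst,
          T_zero i r k q hq]
        ring
    simp only at hconst
    simp only [hWmdef]
    linear_combination hconst
  have W_anti : ∀ j k, Wm j k = -Wm k j := by
    intro j k
    by_cases h : j = k
    · subst h
      have h1 := R2 p₀ hp₀ j
      have h2 := DtC_form p₀ hp₀
      simp only [hWmdef, eq_self_iff_true, if_true]
      linarith
    · have h3 := R3 p₀ hp₀ k j (Ne.symm h)
      simp only [hWmdef, if_neg (Ne.symm h), if_neg h]
      linear_combination h3
  have DtB_form : ∀ k, ∀ p ∈ U, Dd et (B k) p = -(c₀ * p.2 k) + b₀ k := by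
    intro k p hp
    have h1 := R1 p hp k
    have h2 := DxA_form k p hp
    linarith
  -- B formula
  set b₁ : Fin 3 → ℝ := fun k => B k p₀ - (-(c₀*p₀.1 + c₁) * p₀.2 k
      + (∑ r, Wm k r * p₀.2 r) + p₀.1 * b₀ k) with hb₁def
  have B_form : ∀ k, ∀ p ∈ U, B k p = -(c₀*p.1 + c₁) * p.2 k
      + (∑ r, Wm k r * p.2 r) + p.1 * b₀ k + b₁ k := by
    intro k p hp
    have hdneg : ∀ q : P4, DifferentiableAt ℝ (fun q : P4 => -(c₀*q.1 + c₁)) q :=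
      fun q => ((dfst.const_mul c₀).add_const c₁).neg
    have hdsum : ∀ q : P4, DifferentiableAt ℝ (fun q : P4 => ∑ r, Wm k r * q.2 r) q :=
      fun q => DifferentiableAt.fun_sum (fun r _ => (dsnd r).const_mul (Wm k r))
    have hdcand : ∀ q : P4, DifferentiableAt ℝ (fun q : P4 => -(c₀*q.1 + c₁) * q.2 k
        + (∑ r, Wm k r * q.2 r) + q.1 * b₀ k) q :=
      fun q => (((hdneg q).mul (dsnd k)).add (hdsum q)).add (dfst.mul_const (b₀ k))
    have hDneg : ∀ q : P4, ∀ w, Dd w (fun q : P4 => -(c₀*q.1 + c₁)) q = -(c₀ * w.1) := by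
      intro q w
      rw [show (fun q : P4 => -(c₀*q.1 + c₁)) = (fun q : P4 => -(c₀*q.1 + c₁ : ℝ)) from rfl,
        Dd_negf w, Dd_addf (dfst.const_mul c₀) (differentiableAt_const c₁) w,
        Dd_const_mulf dfst c₀ w, Dd_fst, Dd_constf]
      ring
    have hDsum : ∀ q : P4, ∀ w, Dd w (fun q : P4 => ∑ r, Wm k r * q.2 r) q
        = ∑ r, Wm k r * w.2 r := by
      intro q w
      rw [Dd_sumf (fun r => (dsnd r).const_mul (Wm k r)) w]
      exact Finset.sum_congr rfl (fun r _ => by rw [Dd_const_mulf (dsnd r) (Wm k r) w, Dd_snd])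
    have hDlast : ∀ q : P4, ∀ w, Dd w (fun q : P4 => q.1 * b₀ k) q = w.1 * b₀ k := by
      intro q w
      rw [Dd_mulf dfst (differentiableAt_const (b₀ k)) w, Dd_constf, Dd_fst]
      ring
    have hconst : (fun q => B k q - (-(c₀*q.1 + c₁) * q.2 k
          + (∑ r, Wm k r * q.2 r) + q.1 * b₀ k)) p
        = (fun q => B k q - (-(c₀*q.1 + c₁) * q.2 k
          + (∑ r, Wm k r * q.2 r) + q.1 * b₀ k)) p₀ := by
      apply const_on hU hUc (fun q hq => (diffAt hU (hB k) hq).sub (hdcand q))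
        (fun q hq => ?_) hp hp₀
      apply clm_eq_zero
      · show Dd et (fun q => B k q - (-(c₀*q.1 + c₁) * q.2 k
          + (∑ r, Wm k r * q.2 r) + q.1 * b₀ k)) q = 0
        rw [Dd_subf (diffAt hU (hB k) hq) (hdcand q) et, DtB_form k q hq,
          Dd_addf (((hdneg q).fun_mul (dsnd k)).fun_add (hdsum q)) (dfst.mul_const (b₀ k)) et,
          Dd_addf ((hdneg q).fun_mul (dsnd k)) (hdsum q) et,
          Dd_mulf (hdneg q) (dsnd k) et, hDneg q et, hDsum q et, hDlast q et,
          Dd_snd, et_snd, et_fst]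
        simp only [et_snd, et_fst, mul_zero, zero_mul, mul_one, Finset.sum_const_zero,
          add_zero, zero_add]
        ring
      · intro i
        show Dd (ex i) (fun q => B k q - (-(c₀*q.1 + c₁) * q.2 k
          + (∑ r, Wm k r * q.2 r) + q.1 * b₀ k)) q = 0
        rw [Dd_subf (diffAt hU (hB k) hq) (hdcand q) (ex i), DxB_form k i q hq,
          Dd_addf (((hdneg q).fun_mul (dsnd k)).fun_add (hdsum q)) (dfst.mul_const (b₀ k)) (ex i),
          Dd_addf ((hdneg q).fun_mul (dsnd k)) (hdsum q) (ex i),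
          Dd_mulf (hdneg q) (dsnd k) (ex i), hDneg q (ex i), hDsum q (ex i), hDlast q (ex i),
          Dd_snd, ex_snd, ex_fst]
        simp only [ex_snd, mul_ite, mul_one, mul_zero]
        rw [Finset.sum_ite_eq' Finset.univ i (fun r => Wm k r)]
        simp only [Finset.mem_univ, if_true]
        by_cases hik : i = k
        · subst hik
          simp only [if_pos rfl]
          ring
        · rw [if_neg hik, if_neg (fun e => hik e.symm)]
          ring
    simp only at hconst
    simp only [hb₁def]
    linear_combination hconst
  exact ⟨a₀, c₀, c₁, c₂, b₀, b₁, Wm, W_anti,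
    fun p hp => ⟨A_form p hp, fun k => B_form k p hp, C_form p hp⟩⟩

lemma factor_out {E1 : ℝ} {E2 : Fin 3 → ℝ} {v : Fin 3 → ℝ} {M : ℝ} (hM : 0 < M)
    (h : E1 * M + ∑ i, v i * (E2 i * M) = 0) : E1 + ∑ i, v i * E2 i = 0 := by
  have h2 : (E1 + ∑ i, v i * E2 i) * M = 0 := by
    rw [add_mul, Finset.sum_mul,
      show ∑ i, (v i * E2 i) * M = ∑ i, v i * (E2 i * M) from
        Finset.sum_congr rfl fun i _ => by ring]
    exact h
  exact (mul_eq_zero.1 h2).resolve_right (ne_of_gt hM)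



/-- The normalized global Maxwellian `μ(v) = (2π)^{-3/2} exp(-|v|²/2)`. -/
def Mxw (v : EuclideanSpace ℝ (Fin 3)) : ℝ :=
  (2 * Real.pi) ^ (-(3:ℝ)/2) * Real.exp (-‖v‖^2 / 2)

/-- The cross product on `ℝ³` (as Euclidean space). -/
def cross3 (a b : EuclideanSpace ℝ (Fin 3)) : EuclideanSpace ℝ (Fin 3) :=
  (WithLp.equiv 2 (Fin 3 → ℝ)).symm
    ![a 1 * b 2 - a 2 * b 1, a 2 * b 0 - a 0 * b 2, a 0 * b 1 - a 1 * b 0]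

/-- if the macroscopic (hydrodynamic) field
`Z(t,x,v) = (a(t,x) + b(t,x)·v + c(t,x)|v|²)μ^{1/2}(v)` solves the free transport
equation `∂_tZ + v·∇ₓZ = 0` on `(0,1)×Ω×ℝ³` with `Ω` a nonempty connected open set, then
`a`, `b`, `c` are the rigid fields
`a = (c₀/2)|x|² - b₀·x + a₀`, `b = -c₀tx - c₁x + ϖ×x + b₀t + b₁`,
`c = (c₀/2)t² + c₁t + c₂` for some constants. -/
theorem stmt18 (Ω : Set (EuclideanSpace ℝ (Fin 3)))
    (hconn : IsConnected Ω) (hop : IsOpen Ω)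
    (a : ℝ → EuclideanSpace ℝ (Fin 3) → ℝ)
    (bf : ℝ → EuclideanSpace ℝ (Fin 3) → EuclideanSpace ℝ (Fin 3))
    (c : ℝ → EuclideanSpace ℝ (Fin 3) → ℝ)
    (ha : ContDiffOn ℝ (⊤ : ℕ∞) (fun p : ℝ × EuclideanSpace ℝ (Fin 3) => a p.1 p.2)
      (Set.Ioo (0:ℝ) 1 ×ˢ Ω))
    (hb : ContDiffOn ℝ (⊤ : ℕ∞) (fun p : ℝ × EuclideanSpace ℝ (Fin 3) => bf p.1 p.2)
      (Set.Ioo (0:ℝ) 1 ×ˢ Ω))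
    (hc : ContDiffOn ℝ (⊤ : ℕ∞) (fun p : ℝ × EuclideanSpace ℝ (Fin 3) => c p.1 p.2)
      (Set.Ioo (0:ℝ) 1 ×ˢ Ω))
    (Z : ℝ → EuclideanSpace ℝ (Fin 3) → EuclideanSpace ℝ (Fin 3) → ℝ)
    (hZ : ∀ t x v, Z t x v
      = (a t x + (inner ℝ (bf t x) v : ℝ) + c t x * ‖v‖^2) * Real.sqrt (Mxw v))
    (hpde : ∀ t ∈ Set.Ioo (0:ℝ) 1, ∀ x ∈ Ω, ∀ v : EuclideanSpace ℝ (Fin 3),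
      deriv (fun τ => Z τ x v) t
        + ∑ i : Fin 3,
            v i * deriv (fun τ : ℝ => Z t (x + τ • EuclideanSpace.single i (1:ℝ)) v) 0
        = 0) :
    ∃ (a₀ c₀ c₁ c₂ : ℝ) (b₀ b₁ ϖ : EuclideanSpace ℝ (Fin 3)),
      ∀ t ∈ Set.Ioo (0:ℝ) 1, ∀ x ∈ Ω,
        a t x = c₀ / 2 * ‖x‖^2 - (inner ℝ b₀ x : ℝ) + a₀ ∧
        bf t x = -((c₀ * t) • x) - c₁ • x + cross3 ϖ x + t • b₀ + b₁ ∧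
        c t x = c₀ / 2 * t^2 + c₁ * t + c₂ := by
  set U : Set P4 := Set.Ioo (0:ℝ) 1 ×ˢ Ω with hUdef
  have hUo : IsOpen U := isOpen_Ioo.prod hop
  have hUco : IsPreconnected U :=
    ((isConnected_Ioo (by norm_num : (0:ℝ) < 1)).prod hconn).isPreconnected
  obtain ⟨x₀, hx₀⟩ := hconn.nonempty
  have hp₀ : ((1/2 : ℝ), x₀) ∈ U := ⟨⟨by norm_num, by norm_num⟩, hx₀⟩
  have hBk : ∀ k : Fin 3, ContDiffOn ℝ (⊤ : ℕ∞) (fun p : P4 => bf p.1 p.2 k) U :=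
    fun k => by
      have h := (EuclideanSpace.proj (𝕜 := ℝ) k).contDiff.comp_contDiffOn hb
      exact h
  have hM : ∀ v : E3, 0 < Real.sqrt (Mxw v) := by
    intro v
    apply Real.sqrt_pos.2
    simp only [Mxw]
    positivity
  -- the polynomial identity
  have hpoly : ∀ p ∈ U, ∀ v : E3,
      Dd et (fun q : P4 => a q.1 q.2) p
        + (∑ k, Dd et (fun q : P4 => bf q.1 q.2 k) p * v k)
        + Dd et (fun q : P4 => c q.1 q.2) p * ‖v‖^2
      + ∑ i, v i * (Dd (ex i) (fun q : P4 => a q.1 q.2) p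
        + (∑ k, Dd (ex i) (fun q : P4 => bf q.1 q.2 k) p * v k)
        + Dd (ex i) (fun q : P4 => c q.1 q.2) p * ‖v‖^2) = 0 := by
    rintro ⟨t, x⟩ hp v
    have ht : t ∈ Set.Ioo (0:ℝ) 1 := hp.1
    have hx : x ∈ Ω := hp.2
    have hfun_t : (fun τ => Z τ x v)
        = fun τ => (a τ x + (∑ k, bf τ x k * v k) + c τ x * ‖v‖^2) * Real.sqrt (Mxw v) := by
      funext τ
      rw [hZ, inner_expand]
    have hfun_x : ∀ i : Fin 3, (fun τ : ℝ => Z t (x + τ • EuclideanSpace.single i (1:ℝ)) v)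
        = fun τ : ℝ => (a t (x + τ • EuclideanSpace.single i (1:ℝ))
            + (∑ k, bf t (x + τ • EuclideanSpace.single i (1:ℝ)) k * v k)
            + c t (x + τ • EuclideanSpace.single i (1:ℝ)) * ‖v‖^2) * Real.sqrt (Mxw v) := by
      intro i
      funext τ
      rw [hZ, inner_expand]
    have hd1 : deriv (fun τ => Z τ x v) t
        = (Dd et (fun q : P4 => a q.1 q.2) (t, x)
          + (∑ k, Dd et (fun q : P4 => bf q.1 q.2 k) (t, x) * v k)
          + Dd et (fun q : P4 => c q.1 q.2) (t, x) * ‖v‖^2) * Real.sqrt (Mxw v) := by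
      rw [hfun_t]
      exact ((((slice_t hUo ha hp).add (HasDerivAt.fun_sum fun k _ =>
        (slice_t hUo (hBk k) hp).mul_const (v k))).add
        ((slice_t hUo hc hp).mul_const (‖v‖^2))).mul_const (Real.sqrt (Mxw v))).deriv
    have hd2 : ∀ i : Fin 3, deriv (fun τ : ℝ => Z t (x + τ • EuclideanSpace.single i (1:ℝ)) v) 0
        = (Dd (ex i) (fun q : P4 => a q.1 q.2) (t, x)
          + (∑ k, Dd (ex i) (fun q : P4 => bf q.1 q.2 k) (t, x) * v k)
          + Dd (ex i) (fun q : P4 => c q.1 q.2) (t, x) * ‖v‖^2) * Real.sqrt (Mxw v) := by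
      intro i
      rw [hfun_x i]
      exact ((((slice_x hUo ha hp i).add (HasDerivAt.fun_sum fun k _ =>
        (slice_x hUo (hBk k) hp i).mul_const (v k))).add
        ((slice_x hUo hc hp i).mul_const (‖v‖^2))).mul_const (Real.sqrt (Mxw v))).deriv
    have h := hpde t ht x hx v
    have hsum_eq : ∑ i : Fin 3, v i * deriv
          (fun τ : ℝ => Z t (x + τ • EuclideanSpace.single i (1:ℝ)) v) 0
        = ∑ i : Fin 3, v i * ((Dd (ex i) (fun q : P4 => a q.1 q.2) (t, x)
          + (∑ k, Dd (ex i) (fun q : P4 => bf q.1 q.2 k) (t, x) * v k)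
          + Dd (ex i) (fun q : P4 => c q.1 q.2) (t, x) * ‖v‖^2) * Real.sqrt (Mxw v)) :=
      Finset.sum_congr rfl (fun i _ => by rw [hd2 i])
    rw [hd1, hsum_eq] at h
    exact factor_out (E2 := fun i => Dd (ex i) (fun q : P4 => a q.1 q.2) (t, x)
          + (∑ k, Dd (ex i) (fun q : P4 => bf q.1 q.2 k) (t, x) * v k)
          + Dd (ex i) (fun q : P4 => c q.1 q.2) (t, x) * ‖v‖^2)
      (v := fun i => v i) (hM v) h
  -- the macroscopic relations
  have R0 : ∀ p ∈ U, Dd et (fun q : P4 => a q.1 q.2) p = 0 :=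
    fun p hp => (relations hpoly hp).1
  have R1 : ∀ p ∈ U, ∀ k, Dd et (fun q : P4 => bf q.1 q.2 k) p
      + Dd (ex k) (fun q : P4 => a q.1 q.2) p = 0 := fun p hp => (relations hpoly hp).2.1
  have R2 : ∀ p ∈ U, ∀ k, Dd et (fun q : P4 => c q.1 q.2) p
      + Dd (ex k) (fun q : P4 => bf q.1 q.2 k) p = 0 := fun p hp => (relations hpoly hp).2.2.1
  have R3 : ∀ p ∈ U, ∀ j k, j ≠ k → Dd (ex j) (fun q : P4 => bf q.1 q.2 k) p
      + Dd (ex k) (fun q : P4 => bf q.1 q.2 j) p = 0 :=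
    fun p hp => (relations hpoly hp).2.2.2.1
  have R4 : ∀ p ∈ U, ∀ k, Dd (ex k) (fun q : P4 => c q.1 q.2) p = 0 :=
    fun p hp => (relations hpoly hp).2.2.2.2
  obtain ⟨a₀, c₀, c₁, c₂, b₀s, b₁s, W, hWanti, hform⟩ :=
    main_core hUo hUco hp₀ ha hBk hc R0 R1 R2 R3 R4
  have hWkk : ∀ k, W k k = 0 := fun k => by have := hWanti k k; linarith
  refine ⟨a₀, c₀, c₁, c₂, (WithLp.equiv 2 (Fin 3 → ℝ)).symm b₀s,
    (WithLp.equiv 2 (Fin 3 → ℝ)).symm b₁s,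
    (WithLp.equiv 2 (Fin 3 → ℝ)).symm ![W 2 1, W 0 2, W 1 0], ?_⟩
  intro t ht x hx
  have hp : ((t, x) : P4) ∈ U := ⟨ht, hx⟩
  obtain ⟨hAf, hBf, hCf⟩ := hform (t, x) hp
  simp only at hAf hBf hCf
  refine ⟨?_, ?_, hCf⟩
  · rw [← real_inner_self_eq_norm_sq, inner_expand, inner_expand]
    simp only [WithLp.equiv_symm_apply, PiLp.toLp_apply]
    exact hAf
  · ext k
    simp only [PiLp.add_apply, PiLp.sub_apply, PiLp.neg_apply, PiLp.smul_apply,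
      smul_eq_mul, cross3, WithLp.equiv_symm_apply, PiLp.toLp_apply]
    fin_cases k
    · simp [Matrix.cons_val_zero, Matrix.cons_val_one, Matrix.head_cons]
      have h := hBf 0
      rw [Fin.sum_univ_three] at h
      linear_combination h + x 1 * hWanti 0 1 + x 0 * hWkk 0
    · simp [Matrix.cons_val_zero, Matrix.cons_val_one, Matrix.head_cons]
      have h := hBf 1
      rw [Fin.sum_univ_three] at h
      linear_combination h + x 2 * hWanti 1 2 + x 1 * hWkk 1
    · simp [Matrix.cons_val_zero, Matrix.cons_val_one, Matrix.head_cons,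
        Matrix.cons_val_two, Matrix.tail_cons]
      have h := hBf 2
      rw [Fin.sum_univ_three] at h
      linear_combination h + x 0 * hWanti 0 2 + x 2 * hWkk 2
end
end
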